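/- arXiv:1307.4813 — 3 statements merged into one kernel-verified Lean document; each statement's English description precedes it below -/
import Mathlib

section
/- Let P be a probability measure on ℝ_+^T. Then for every x > 0, the supremum of E_P[U(x + (Δ·S)_T + h·g)] over all trading strategies (Δ,h) with measurable Δ equals the supremum of the same quantity over trading strategies (Δ,h) in which every component Δ_j : ℝ_+^j → ℝ is continuous and bounded. -/
open MeasureTheory Filter Topology Set
open scoped NNReal ENNReal

noncomputable section

/-- The dynamic part of a semi-static trading strategy: for each `j : Fin (T-1)`
(representing the paper's time index `j+1 ∈ {1,…,T-1}`), a function of the first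
`j+1` stock prices `s_1,…,s_{j+1}`. -/
abbrev Strategy (T : ℕ) := (j : Fin (T - 1)) → (Fin (j.1 + 1) → ℝ≥0) → ℝ

/-- Restriction of a path to its first `j+1` coordinates. -/
def restrictPath {T : ℕ} (j : Fin (T - 1)) (ω : Fin T → ℝ≥0) (k : Fin (j.1 + 1)) : ℝ≥0 :=
  ω ⟨k.1, by have h1 := j.isLt; have h2 := k.isLt; omega⟩

/-- Terminal gain `(Δ·S)_T = ∑_{j=1}^{T-1} Δ_j(s_1,…,s_j)(s_{j+1} - s_j)` of a dynamic
strategy (coordinate `i : Fin T` of a path is the stock price `s_{i+1}` at time `i+1`). -/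
def stockGain {T : ℕ} (Δ : Strategy T) (ω : Fin T → ℝ≥0) : ℝ :=
  ∑ j : Fin (T - 1), Δ j (restrictPath j ω) *
    ((ω ⟨j.1 + 1, by have := j.isLt; omega⟩ : ℝ) - (ω ⟨j.1, by have := j.isLt; omega⟩ : ℝ))

/-- Payoff `h·g` of a static option portfolio. -/
def optionGain {T N : ℕ} (g : Fin N → (Fin T → ℝ≥0) → ℝ) (h : Fin N → ℝ) (ω : Fin T → ℝ≥0) : ℝ :=
  ∑ i, h i * g i ω

/-- Terminal wealth `x + (Δ·S)_T + h·g` of a semi-static strategy with initial capital `x`. -/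
def wealth {T N : ℕ} (g : Fin N → (Fin T → ℝ≥0) → ℝ) (x : ℝ) (Δ : Strategy T)
    (h : Fin N → ℝ) (ω : Fin T → ℝ≥0) : ℝ :=
  x + stockGain Δ ω + optionGain g h ω

/-- The σ-algebra generated by the first `k` coordinates, i.e. by `S_1,…,S_k`
(the natural filtration of `S` at time `k`). -/
def Flt (T k : ℕ) : MeasurableSpace (Fin T → ℝ≥0) :=
  MeasurableSpace.comap
    (fun ω (i : Fin (min k T)) => ω ⟨i.1, lt_of_lt_of_le i.isLt (min_le_right k T)⟩) inferInstance

/-- The canonical process `S` is a `Q`-martingale in its natural filtration: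
each `S_i` is integrable and `E_Q[S_{j+1} | S_1,…,S_j] = S_j` for `j = 1,…,T-1`. -/
def IsMartingaleMeasure {T : ℕ} (Q : Measure (Fin T → ℝ≥0)) : Prop :=
  (∀ i : Fin T, Integrable (fun ω => (ω i : ℝ)) Q) ∧
  ∀ j : Fin T, ∀ hj : j.1 + 1 < T,
    Q[(fun ω => (ω ⟨j.1 + 1, hj⟩ : ℝ)) | Flt T (j.1 + 1)] =ᵐ[Q] fun ω => (ω j : ℝ)

/-- The set `ℳ` of martingale measures calibrated to the option prices (all zero). -/
def MartMeasures {T N : ℕ} (g : Fin N → (Fin T → ℝ≥0) → ℝ) : Set (Measure (Fin T → ℝ≥0)) :=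
  {Q | IsProbabilityMeasure Q ∧ IsMartingaleMeasure Q ∧
    ∀ i, Integrable (g i) Q ∧ ∫ ω, g i ω ∂Q = 0}

/-- Two measures are equivalent. -/
def MeasEquiv {Ω : Type*} [MeasurableSpace Ω] (P Q : Measure Ω) : Prop :=
  P ≪ Q ∧ Q ≪ P

open scoped BoundedContinuousFunction

/-! A measurable `Δ_j` is, almost surely under the law of `(S_1,…,S_{j+1})`, the limit of bounded
continuous functions: truncate it, approximate the truncations in `L¹` by bounded continuous
functions, and pass to an a.e. convergent subsequence. Since `U` is bounded and continuous,
dominated convergence carries this over to the expected utilities, so every value attained with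
measurable strategies is a limit of values attained with bounded continuous ones. -/

theorem MeasureTheory.AEStronglyMeasurable.exists_seq_boundedContinuous_tendsto_ae
    {X : Type*} [TopologicalSpace X] [NormalSpace X] [MeasurableSpace X] [BorelSpace X]
    {μ : Measure X} [IsFiniteMeasure μ] [μ.WeaklyRegular] {f : X → ℝ}
    (hf : AEStronglyMeasurable f μ) :
    ∃ G : ℕ → X →ᵇ ℝ, ∀ᵐ x ∂μ, Tendsto (fun n => G n x) atTop (𝓝 (f x)) := by
  have hG (k : ℕ) :
      ∃ G : X →ᵇ ℝ, eLpNorm (ProbabilityTheory.truncation f k - ⇑G) 1 μ ≤ (k : ℝ≥0∞)⁻¹ :=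
    (hf.memLp_truncation.exists_boundedContinuous_eLpNorm_sub_le ENNReal.one_ne_top
      (by simp)).imp fun _ => And.left
  choose G hG using hG
  have hdiff :
      TendstoInMeasure μ (fun k : ℕ => ProbabilityTheory.truncation f k - ⇑(G k)) atTop 0 := by
    refine tendstoInMeasure_of_tendsto_eLpNorm one_ne_zero
      (fun k => hf.truncation.sub (G k).continuous.aestronglyMeasurable)
      aestronglyMeasurable_const ?_
    simp only [sub_zero]
    exact tendsto_of_tendsto_of_tendsto_of_le_of_le tendsto_const_nhds
      ENNReal.tendsto_inv_nat_nhds_zero (fun _ => zero_le) hG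
  obtain ⟨ns, hns, hae⟩ := hdiff.exists_seq_tendsto_ae
  refine ⟨fun i => G (ns i), hae.mono fun x hx => ?_⟩
  have htrunc : Tendsto (fun i => ProbabilityTheory.truncation f (ns i) x) atTop (𝓝 (f x)) := by
    refine tendsto_const_nhds.congr' ?_
    filter_upwards [hns.tendsto_atTop.eventually_gt_atTop ⌈|f x|⌉₊] with i hi
    exact (ProbabilityTheory.truncation_eq_self
      ((Nat.le_ceil _).trans_lt (Nat.cast_lt.mpr hi))).symm
  simpa using htrunc.sub hx

theorem tendsto_integral_comp_of_tendsto_ae {α : Type*} [MeasurableSpace α] {μ : Measure α}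
    [IsFiniteMeasure μ] {U : ℝ → ℝ} (hU : Continuous U) {C : ℝ} (hC : ∀ z, |U z| ≤ C)
    {F : ℕ → α → ℝ} {f : α → ℝ} (hF : ∀ n, AEMeasurable (F n) μ)
    (hlim : ∀ᵐ a ∂μ, Tendsto (fun n => F n a) atTop (𝓝 (f a))) :
    Tendsto (fun n => ∫ a, U (F n a) ∂μ) atTop (𝓝 (∫ a, U (f a) ∂μ)) :=
  tendsto_integral_of_dominated_convergence (fun _ => C)
    (fun n => (hU.measurable.comp_aemeasurable (hF n)).aestronglyMeasurable)
    (integrable_const C) (fun n => ae_of_all _ fun a => hC (F n a))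
    (hlim.mono fun _ ha => (hU.tendsto _).comp ha)

theorem continuous_restrictPath {T : ℕ} (j : Fin (T - 1)) :
    Continuous (restrictPath (T := T) j) :=
  continuous_pi fun _ => continuous_apply _

section Wealth

variable {T N : ℕ} (g : Fin N → (Fin T → ℝ≥0) → ℝ) (x : ℝ) (h : Fin N → ℝ)

theorem continuous_wealth (hg : ∀ i, Continuous (g i)) {Δ : Strategy T}
    (hΔ : ∀ j, Continuous (Δ j)) : Continuous (wealth g x Δ h) := by
  have hS (i : Fin T) : Continuous fun ω : Fin T → ℝ≥0 => (ω i : ℝ) := by fun_prop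
  have hstock : Continuous (stockGain Δ) :=
    continuous_finsetSum _ fun j _ =>
      ((hΔ j).comp (continuous_restrictPath j)).mul ((hS _).sub (hS _))
  have hoption : Continuous (optionGain g h) :=
    continuous_finsetSum _ fun i _ => continuous_const.mul (hg i)
  exact (continuous_const.add hstock).add hoption

theorem tendsto_wealth {Δ : Strategy T} {Δs : ℕ → Strategy T} {ω : Fin T → ℝ≥0}
    (hΔ : ∀ j, Tendsto (fun n => Δs n j (restrictPath j ω)) atTop (𝓝 (Δ j (restrictPath j ω)))) :
    Tendsto (fun n => wealth g x (Δs n) h ω) atTop (𝓝 (wealth g x Δ h ω)) :=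
  (tendsto_const_nhds.add (tendsto_finsetSum _ fun j _ => (hΔ j).mul_const _)).add
    tendsto_const_nhds

end Wealth

theorem exists_seq_continuous_bounded_strategy_tendsto_ae {T : ℕ} (P : Measure (Fin T → ℝ≥0))
    [IsFiniteMeasure P] {Δ : Strategy T} (hΔ : ∀ j, Measurable (Δ j)) :
    ∃ Δs : ℕ → Strategy T, (∀ n j, Continuous (Δs n j) ∧ ∃ C : ℝ, ∀ s, |Δs n j s| ≤ C) ∧
      ∀ᵐ ω ∂P, ∀ j,
        Tendsto (fun n => Δs n j (restrictPath j ω)) atTop (𝓝 (Δ j (restrictPath j ω))) := by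
  choose G hG using fun j => ((hΔ j).aestronglyMeasurable
    (μ := P.map (restrictPath j))).exists_seq_boundedContinuous_tendsto_ae
  refine ⟨fun n j => G j n,
    fun n j => ⟨(G j n).continuous, ‖G j n‖, (G j n).norm_coe_le_norm⟩, ?_⟩
  exact ae_all_iff.mpr fun j => ae_of_ae_map (continuous_restrictPath j).aemeasurable (hG j)

theorem sup_utility_measurable_eq_sup_continuous_bounded_general
    (T N : ℕ)
    (g : Fin N → (Fin T → ℝ≥0) → ℝ) (hg : ∀ i, Continuous (g i))
    (U : ℝ → ℝ) (hUc : Continuous U) (hUb : ∃ C : ℝ, ∀ z, |U z| ≤ C)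
    (P : Measure (Fin T → ℝ≥0)) [IsProbabilityMeasure P]
    (x : ℝ) :
    sSup {r : ℝ | ∃ Δ : Strategy T, ∃ h : Fin N → ℝ, (∀ j, Measurable (Δ j)) ∧
        r = ∫ ω, U (wealth g x Δ h ω) ∂P}
      = sSup {r : ℝ | ∃ Δ : Strategy T, ∃ h : Fin N → ℝ,
          (∀ j, Continuous (Δ j) ∧ ∃ C : ℝ, ∀ s, |Δ j s| ≤ C) ∧
          r = ∫ ω, U (wealth g x Δ h ω) ∂P} := by
  obtain ⟨C, hC⟩ := hUb
  set A := {r : ℝ | ∃ Δ : Strategy T, ∃ h : Fin N → ℝ, (∀ j, Measurable (Δ j)) ∧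
    r = ∫ ω, U (wealth g x Δ h ω) ∂P}
  set B := {r : ℝ | ∃ Δ : Strategy T, ∃ h : Fin N → ℝ,
    (∀ j, Continuous (Δ j) ∧ ∃ C : ℝ, ∀ s, |Δ j s| ≤ C) ∧ r = ∫ ω, U (wealth g x Δ h ω) ∂P}
  have hBA : B ⊆ A := fun _ ⟨Δ, h, hΔ, hr⟩ => ⟨Δ, h, fun j => (hΔ j).1.measurable, hr⟩
  have hA : BddAbove A := by
    refine ⟨C, ?_⟩
    rintro _ ⟨Δ, h, -, rfl⟩
    calc ∫ ω, U (wealth g x Δ h ω) ∂P ≤ ‖∫ ω, U (wealth g x Δ h ω) ∂P‖ := Real.le_norm_self _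
      _ ≤ C * P.real univ := norm_integral_le_of_norm_le_const (ae_of_all _ fun ω => hC _)
      _ = C := by simp
  have hB : B.Nonempty := ⟨_, fun _ _ => 0, 0, fun _ => ⟨continuous_const, 0, by simp⟩, rfl⟩
  refine le_antisymm (csSup_le (hB.mono hBA) ?_) (csSup_le_csSup hA hB hBA)
  rintro _ ⟨Δ, h, hΔ, rfl⟩
  obtain ⟨Δs, hΔs, hlim⟩ := exists_seq_continuous_bounded_strategy_tendsto_ae P hΔ
  refine le_of_tendsto' (tendsto_integral_comp_of_tendsto_ae hUc hC
    (fun n => (continuous_wealth g x h hg fun j => (hΔs n j).1).aemeasurable)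
    (hlim.mono fun ω => tendsto_wealth g x h)) fun n => le_csSup (hA.mono hBA) ?_
  exact ⟨Δs n, h, hΔs n, rfl⟩

/-- For a probability measure `P` on `ℝ_+^T` and `x > 0`, the supremum of
`E_P[U(x + (Δ·S)_T + h·g)]` over all trading strategies with measurable `Δ` equals the
supremum over strategies in which every `Δ_j` is continuous and bounded. -/
theorem sup_utility_measurable_eq_sup_continuous_bounded
    (T N : ℕ) (hT : 1 ≤ T)
    (g : Fin N → (Fin T → ℝ≥0) → ℝ) (hg : ∀ i, Continuous (g i))
    (U : ℝ → ℝ) (hUc : Continuous U) (hUm : Monotone U) (hUb : ∃ C : ℝ, ∀ z, |U z| ≤ C)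
    (P : Measure (Fin T → ℝ≥0)) [IsProbabilityMeasure P]
    (x : ℝ) (hx : 0 < x) :
    sSup {r : ℝ | ∃ Δ : Strategy T, ∃ h : Fin N → ℝ, (∀ j, Measurable (Δ j)) ∧
        r = ∫ ω, U (wealth g x Δ h ω) ∂P}
      = sSup {r : ℝ | ∃ Δ : Strategy T, ∃ h : Fin N → ℝ,
          (∀ j, Continuous (Δ j) ∧ ∃ C : ℝ, ∀ s, |Δ j s| ≤ C) ∧
          r = ∫ ω, U (wealth g x Δ h ω) ∂P} :=
  sup_utility_measurable_eq_sup_continuous_bounded_general T N g hg U hUc hUb P x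
end
end

section
/- Let P be a probability measure on ℝ_+^T such that there exists Q ∈ ℳ equivalent to P. Then the set 𝒞_P is bounded in L⁰(P), i.e. sup_{c ∈ 𝒞_P} P(c > K) → 0 as K → ∞. -/
/-!
Under a calibrated martingale measure `Q`, every admissible terminal wealth
`x + (Δ·S)_T + h·g` has `Q`-expectation exactly `x`, although `(Δ·S)_T` need not be integrable.
This goes by induction on `T`: disintegrate `Q` along the first `T - 1` prices. On each fibre
`Δ_{T-1}` is a constant and the conditional mean of `S_T` is `S_{T-1}`, so the last trade
integrates to zero, while the fibre integrals of the static part form an integrable claim of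
horizon `T - 1` with the same mean; nonnegativity of the wealth lets the `Q`-integral be computed fibre by fibre.
Hence `𝒞_P` is bounded in `L¹(Q)`, so in `L⁰(Q)` by Markov's inequality, and `P ≪ Q` carries
boundedness in `L⁰` over to `P` through the ε-δ form of absolute continuity.
-/

open MeasureTheory Filter Topology Set
open scoped NNReal ENNReal

noncomputable section

/-- Gain `(Δ·S)_k` of a dynamic strategy up to time `k ∈ {0,…,T}`. -/
def stockGainUpTo {T : ℕ} (Δ : Strategy T) (k : ℕ) (ω : Fin T → ℝ≥0) : ℝ :=
  ∑ j : Fin (T - 1), if j.1 + 2 ≤ k then Δ j (restrictPath j ω) *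
    ((ω ⟨j.1 + 1, by have := j.isLt; omega⟩ : ℝ) - (ω ⟨j.1, by have := j.isLt; omega⟩ : ℝ)) else 0

/-- A process `Y` (indexed by the times `0,…,T`) is a `P`-supermartingale for the natural
filtration of `S`. -/
def IsSupermartingaleProc {T : ℕ} (P : Measure (Fin T → ℝ≥0))
    (Y : Fin (T + 1) → (Fin T → ℝ≥0) → ℝ) : Prop :=
  (∀ k : Fin (T + 1), Measurable[Flt T k.1] (Y k)) ∧
  (∀ k, Integrable (Y k) P) ∧
  ∀ k l : Fin (T + 1), k ≤ l → (P[Y l | Flt T k.1]) ≤ᵐ[P] Y k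

/-- The set `𝒴_P(y)`: nonnegative processes `Y` with `Y_0 = y` such that `X Y` is a
`P`-supermartingale for every admissible wealth process `X ∈ 𝔛_P(1,0)`. -/
def Yset {T : ℕ} (P : Measure (Fin T → ℝ≥0)) (y : ℝ) :
    Set (Fin (T + 1) → (Fin T → ℝ≥0) → ℝ) :=
  {Y | (∀ k, ∀ᵐ ω ∂P, 0 ≤ Y k ω) ∧ (∀ᵐ ω ∂P, Y 0 ω = y) ∧
    ∀ Δ : Strategy T, (∀ j, Measurable (Δ j)) → (∀ᵐ ω ∂P, 0 ≤ 1 + stockGain Δ ω) →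
      IsSupermartingaleProc P (fun k ω => (1 + stockGainUpTo Δ k.1 ω) * Y k ω)}

/-- The set `𝔜_P(y)`: elements of `𝒴_P(y)` with `E_P[Y_T (X_T + h·g)] ≤ x y` for every
`x > 0`, `h` and `X ∈ 𝔛_P(x,h)`. -/
def Yfrak {T N : ℕ} (P : Measure (Fin T → ℝ≥0)) (g : Fin N → (Fin T → ℝ≥0) → ℝ) (y : ℝ) :
    Set (Fin (T + 1) → (Fin T → ℝ≥0) → ℝ) :=
  {Y | Y ∈ Yset P y ∧ ∀ x : ℝ, 0 < x → ∀ h : Fin N → ℝ, ∀ Δ : Strategy T,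
      (∀ j, Measurable (Δ j)) → (∀ᵐ ω ∂P, 0 ≤ wealth g x Δ h ω) →
      ∫ ω, Y (Fin.last T) ω * wealth g x Δ h ω ∂P ≤ x * y}

/-- The set `𝒞_P(x)` of nonnegative claims in `L⁰_+(P)` dominated by the terminal wealth
of an admissible semi-static strategy with initial capital `x`. -/
def Cset {T N : ℕ} (P : Measure (Fin T → ℝ≥0)) (g : Fin N → (Fin T → ℝ≥0) → ℝ) (x : ℝ) :
    Set ((Fin T → ℝ≥0) → ℝ) :=
  {c | AEMeasurable c P ∧ (∀ᵐ ω ∂P, 0 ≤ c ω) ∧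
    ∃ Δ : Strategy T, ∃ h : Fin N → ℝ, (∀ j, Measurable (Δ j)) ∧
      (∀ᵐ ω ∂P, 0 ≤ wealth g x Δ h ω) ∧ (∀ᵐ ω ∂P, c ω ≤ wealth g x Δ h ω)}

/-- The set `𝒟_P(y)` of elements of `L⁰_+(P)` dominated by `Y_T` for some `Y ∈ 𝔜_P(y)`. -/
def Dset {T N : ℕ} (P : Measure (Fin T → ℝ≥0)) (g : Fin N → (Fin T → ℝ≥0) → ℝ) (y : ℝ) :
    Set ((Fin T → ℝ≥0) → ℝ) :=
  {d | AEMeasurable d P ∧ (∀ᵐ ω ∂P, 0 ≤ d ω) ∧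
    ∃ Y ∈ Yfrak P g y, ∀ᵐ ω ∂P, d ω ≤ Y (Fin.last T) ω}

section BoundedInProbability

variable {Ω : Type*} [MeasurableSpace Ω]

def BoundedInProbability (μ : Measure Ω) (C : Set (Ω → ℝ)) : Prop :=
  Tendsto (fun K : ℝ => ⨆ c ∈ C, μ {ω | K < c ω}) atTop (𝓝 0)

lemma boundedInProbability_of_lintegral_le {μ : Measure Ω} {C : Set (Ω → ℝ)} {M : ℝ≥0∞}
    (hM : M ≠ ∞) (hmeas : ∀ c ∈ C, AEMeasurable c μ)
    (hbound : ∀ c ∈ C, ∫⁻ ω, ENNReal.ofReal (c ω) ∂μ ≤ M) : BoundedInProbability μ C := by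
  have hlim : Tendsto (fun K : ℝ => M / ENNReal.ofReal K) atTop (𝓝 0) := by
    simpa using ENNReal.Tendsto.const_div ENNReal.tendsto_ofReal_atTop (Or.inr hM)
  refine tendsto_of_tendsto_of_tendsto_of_le_of_le' tendsto_const_nhds hlim
    (Eventually.of_forall fun _ => bot_le) ?_
  filter_upwards [eventually_gt_atTop 0] with K hK
  refine iSup₂_le fun c hc => ?_
  calc μ {ω | K < c ω} ≤ μ {ω | ENNReal.ofReal K ≤ ENNReal.ofReal (c ω)} :=
        measure_mono fun ω hω => ENNReal.ofReal_le_ofReal (le_of_lt hω)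
    _ ≤ (∫⁻ ω, ENNReal.ofReal (c ω) ∂μ) / ENNReal.ofReal K :=
        meas_ge_le_lintegral_div (hmeas c hc).ennreal_ofReal
          (ENNReal.ofReal_pos.2 hK).ne' ENNReal.ofReal_ne_top
    _ ≤ M / ENNReal.ofReal K := by gcongr; exact hbound c hc

lemma MeasureTheory.Measure.AbsolutelyContinuous.exists_pos_forall_measure_lt {P Q : Measure Ω}
    [IsFiniteMeasure P] [SigmaFinite Q] (hPQ : P ≪ Q) {ε : ℝ≥0∞} (hε : ε ≠ 0) :
    ∃ δ > 0, ∀ s, Q s < δ → P s < ε := by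
  obtain ⟨δ, hδ, hsmall⟩ :=
    exists_pos_setLIntegral_lt_of_measure_lt (Measure.lintegral_rnDeriv_lt_top P Q).ne hε
  exact ⟨δ, hδ, fun s hs => Measure.setLIntegral_rnDeriv hPQ s ▸ hsmall s hs⟩

lemma BoundedInProbability.of_absolutelyContinuous {P Q : Measure Ω} [IsFiniteMeasure P]
    [SigmaFinite Q] {C : Set (Ω → ℝ)} (hQ : BoundedInProbability Q C) (hPQ : P ≪ Q) :
    BoundedInProbability P C := by
  refine ENNReal.tendsto_nhds_zero.2 fun ε hε => ?_
  obtain ⟨δ, hδ, hPδ⟩ := hPQ.exists_pos_forall_measure_lt hε.ne'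
  filter_upwards [(tendsto_order.1 hQ).2 δ hδ] with K hK
  exact iSup₂_le fun c hc => (hPδ _ ((le_iSup₂ c hc).trans_lt hK)).le

end BoundedInProbability

section Disintegration

variable {β Ω : Type*} [MeasurableSpace β] [MeasurableSpace Ω] [StandardBorelSpace Ω] [Nonempty Ω]
  {ρ : Measure (β × Ω)} [IsFiniteMeasure ρ]

lemma MeasureTheory.Measure.ae_ae_condKernel_of_ae {p : β × Ω → Prop} (h : ∀ᵐ z ∂ρ, p z) :
    ∀ᵐ b ∂ρ.fst, ∀ᵐ y ∂ρ.condKernel b, p (b, y) := by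
  rw [← ρ.disintegrate ρ.condKernel] at h
  exact Measure.ae_ae_of_ae_compProd h

lemma ae_integral_condKernel_const_add {A : β → ℝ} {H : β × Ω → ℝ}
    (hslice : ∀ᵐ b ∂ρ.fst, Integrable (fun y => H (b, y)) (ρ.condKernel b)) :
    ∀ᵐ b ∂ρ.fst, Integrable (fun y => A b + H (b, y)) (ρ.condKernel b) ∧
      ∫ y, A b + H (b, y) ∂ρ.condKernel b = A b + ∫ y, H (b, y) ∂ρ.condKernel b := by
  filter_upwards [hslice] with b hb
  refine ⟨(integrable_const _).add hb, ?_⟩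
  rw [integral_add (integrable_const _) hb, integral_const, probReal_univ, one_smul]

lemma ae_add_integral_condKernel_nonneg {A : β → ℝ} {H : β × Ω → ℝ}
    (hslice : ∀ᵐ b ∂ρ.fst, Integrable (fun y => H (b, y)) (ρ.condKernel b))
    (hpos : ∀ᵐ z ∂ρ, 0 ≤ A z.1 + H z) :
    ∀ᵐ b ∂ρ.fst, 0 ≤ A b + ∫ y, H (b, y) ∂ρ.condKernel b := by
  filter_upwards [ae_integral_condKernel_const_add (A := A) hslice,
    Measure.ae_ae_condKernel_of_ae hpos] with b hb hbpos
  exact hb.2 ▸ integral_nonneg_of_ae hbpos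

lemma lintegral_ofReal_add_eq_condKernel {A : β → ℝ} {H : β × Ω → ℝ} (hA : Measurable A)
    (hH : Measurable H) (hslice : ∀ᵐ b ∂ρ.fst, Integrable (fun y => H (b, y)) (ρ.condKernel b))
    (hpos : ∀ᵐ z ∂ρ, 0 ≤ A z.1 + H z) :
    ∫⁻ z, ENNReal.ofReal (A z.1 + H z) ∂ρ =
      ∫⁻ b, ENNReal.ofReal (A b + ∫ y, H (b, y) ∂ρ.condKernel b) ∂ρ.fst := by
  have hF : Measurable fun z : β × Ω => ENNReal.ofReal (A z.1 + H z) :=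
    ((hA.comp measurable_fst).add hH).ennreal_ofReal
  rw [← Measure.lintegral_condKernel hF]
  refine lintegral_congr_ae ?_
  filter_upwards [ae_integral_condKernel_const_add (A := A) hslice,
    Measure.ae_ae_condKernel_of_ae hpos] with b hb hbpos
  rw [← hb.2, ofReal_integral_eq_lintegral_ofReal hb.1 hbpos]

end Disintegration

section Filtration

lemma measurable_coe_real_apply {T : ℕ} (i : Fin T) :
    Measurable fun ω : Fin T → ℝ≥0 => (ω i : ℝ) :=
  measurable_coe_nnreal_real.comp (measurable_pi_apply i)

lemma Flt_le (T k : ℕ) : Flt T k ≤ (inferInstance : MeasurableSpace (Fin T → ℝ≥0)) :=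
  (measurable_pi_lambda _ fun _ => measurable_pi_apply _).comap_le

lemma measurable_Flt_apply {T k : ℕ} (i : Fin T) (hi : i.1 < k) :
    Measurable[Flt T k] fun ω : Fin T → ℝ≥0 => ω i := by
  unfold Flt
  exact (measurable_pi_apply (X := fun _ : Fin (min k T) => ℝ≥0) ⟨i.1, lt_min hi i.2⟩).comp
    (comap_measurable _)

lemma measurable_Flt_init (m : ℕ) :
    Measurable[Flt (m + 1) m] (Fin.init : (Fin (m + 1) → ℝ≥0) → Fin m → ℝ≥0) :=
  @measurable_pi_lambda _ _ _ (Flt (m + 1) m) _ _ fun i => measurable_Flt_apply i.castSucc i.2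

lemma MeasurableSet.preimage_init_Flt {m k : ℕ} {B : Set (Fin m → ℝ≥0)}
    (hB : MeasurableSet[Flt m k] B) : MeasurableSet[Flt (m + 1) k] (Fin.init ⁻¹' B) := by
  obtain ⟨U, hU, rfl⟩ := hB
  exact (@measurable_pi_lambda _ _ _ (Flt (m + 1) k) _ _ fun i =>
    measurable_Flt_apply (⟨i.1, by omega⟩ : Fin (m + 1)) (lt_of_lt_of_le i.2 (min_le_left _ _))) hU

lemma measurable_init (m : ℕ) : Measurable (Fin.init : (Fin (m + 1) → ℝ≥0) → Fin m → ℝ≥0) :=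
  (measurable_Flt_init m).mono (Flt_le _ _) le_rfl

end Filtration

section MartingaleMeasure

variable {T : ℕ} {Q : Measure (Fin T → ℝ≥0)} [IsFiniteMeasure Q]

lemma IsMartingaleMeasure.setIntegral_succ (hQ : IsMartingaleMeasure Q) {j : ℕ} (hj : j + 1 < T)
    {B : Set (Fin T → ℝ≥0)} (hB : MeasurableSet[Flt T (j + 1)] B) :
    ∫ ω in B, (ω ⟨j + 1, hj⟩ : ℝ) ∂Q = ∫ ω in B, (ω ⟨j, by omega⟩ : ℝ) ∂Q := by
  rw [← setIntegral_condExp (Flt_le T (j + 1)) (hQ.1 _) hB]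
  exact setIntegral_congr_ae (Flt_le T (j + 1) _ hB)
    ((hQ.2 ⟨j, by omega⟩ hj).mono fun ω h _ => h)

lemma isMartingaleMeasure_of_setIntegral (hint : ∀ i : Fin T, Integrable (fun ω => (ω i : ℝ)) Q)
    (hset : ∀ (j : ℕ) (hj : j + 1 < T) (B : Set (Fin T → ℝ≥0)), MeasurableSet[Flt T (j + 1)] B →
      ∫ ω in B, (ω ⟨j + 1, hj⟩ : ℝ) ∂Q = ∫ ω in B, (ω ⟨j, by omega⟩ : ℝ) ∂Q) :
    IsMartingaleMeasure Q := by
  refine ⟨hint, fun j hj => (ae_eq_condExp_of_forall_setIntegral_eq (Flt_le T (j.1 + 1)) (hint _)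
    (fun s _ _ => (hint j).integrableOn) (fun B hB _ => (hset j hj B hB).symm) ?_).symm⟩
  exact ((measurable_coe_nnreal_real.comp
    (measurable_Flt_apply j (Nat.lt_succ_self _))).stronglyMeasurable).aestronglyMeasurable

end MartingaleMeasure

lemma IsMartingaleMeasure.map_init {m : ℕ} {Q : Measure (Fin (m + 1) → ℝ≥0)} [IsFiniteMeasure Q]
    (hQ : IsMartingaleMeasure Q) : IsMartingaleMeasure (Q.map Fin.init) := by
  refine isMartingaleMeasure_of_setIntegral (fun i => ?_) fun j hj B hB => ?_
  · exact (integrable_map_measure (measurable_coe_real_apply i).aestronglyMeasurable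
      (measurable_init _).aemeasurable).2 (hQ.1 i.castSucc)
  · have hBm : MeasurableSet B := Flt_le _ _ _ hB
    have hcoe := measurable_coe_real_apply (T := m)
    rw [setIntegral_map hBm (hcoe _).aestronglyMeasurable (measurable_init _).aemeasurable,
      setIntegral_map hBm (hcoe _).aestronglyMeasurable (measurable_init _).aemeasurable]
    exact hQ.setIntegral_succ (by omega) hB.preimage_init_Flt


section LastPeriod

def lastEquiv (m : ℕ) : (Fin (m + 1) → ℝ≥0) ≃ᵐ (Fin m → ℝ≥0) × ℝ≥0 where
  toFun ω := (Fin.init ω, ω (Fin.last m))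
  invFun z := Fin.snoc z.1 z.2
  left_inv := Fin.snoc_init_self
  right_inv z := by ext <;> simp
  measurable_toFun := (measurable_init m).prodMk (measurable_pi_apply _)
  measurable_invFun := measurable_pi_lambda _ fun i => by
    refine Fin.lastCases ?_ (fun i => ?_) i
    · simpa only [Equiv.coe_fn_symm_mk, Fin.snoc_last] using measurable_snd
    · simp only [Equiv.coe_fn_symm_mk, Fin.snoc_castSucc]
      exact (measurable_pi_apply i).comp measurable_fst

lemma fst_map_lastEquiv {m : ℕ} (Q : Measure (Fin (m + 1) → ℝ≥0)) :
    (Q.map (lastEquiv m)).fst = Q.map Fin.init := by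
  rw [Measure.fst, Measure.map_map measurable_fst (lastEquiv m).measurable]
  rfl

def dropLast {m : ℕ} (Δ : Strategy (m + 2)) : Strategy (m + 1) :=
  fun j => Δ j.castSucc

def lastPeriodValue {m : ℕ} (Δ : Strategy (m + 2)) (G : (Fin (m + 2) → ℝ≥0) → ℝ)
    (z : (Fin (m + 1) → ℝ≥0) × ℝ≥0) : ℝ :=
  Δ (Fin.last m) z.1 * ((z.2 : ℝ) - z.1 (Fin.last m)) + G ((lastEquiv (m + 1)).symm z)

lemma stockGain_add_eq_lastPeriodValue {m : ℕ} (Δ : Strategy (m + 2))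
    (G : (Fin (m + 2) → ℝ≥0) → ℝ) (ω : Fin (m + 2) → ℝ≥0) :
    stockGain Δ ω + G ω =
      stockGain (dropLast Δ) (lastEquiv (m + 1) ω).1 +
        lastPeriodValue Δ G (lastEquiv (m + 1) ω) := by
  have hsplit : stockGain Δ ω = ∑ j : Fin (m + 1),
      Δ j (restrictPath j ω) * ((ω ⟨j.1 + 1, by omega⟩ : ℝ) - (ω ⟨j.1, by omega⟩ : ℝ)) := rfl
  rw [hsplit, Fin.sum_univ_castSucc, lastPeriodValue, MeasurableEquiv.symm_apply_apply]
  simp only [stockGain, dropLast, add_assoc]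
  rfl

lemma measurable_lastPeriodValue {m : ℕ} {Δ : Strategy (m + 2)} {G : (Fin (m + 2) → ℝ≥0) → ℝ}
    (hΔ : Measurable (Δ (Fin.last m))) (hG : Measurable G) : Measurable (lastPeriodValue Δ G) :=
  ((hΔ.comp measurable_fst).mul ((measurable_coe_nnreal_real.comp measurable_snd).sub
    ((measurable_coe_real_apply _).comp measurable_fst))).add
    (hG.comp (lastEquiv _).symm.measurable)

lemma integrable_map_lastEquiv {m : ℕ} {Q : Measure (Fin (m + 1) → ℝ≥0)}
    {G : (Fin (m + 1) → ℝ≥0) → ℝ} (hG : Integrable G Q) :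
    Integrable (fun z => G ((lastEquiv m).symm z)) (Q.map (lastEquiv m)) :=
  (integrable_map_equiv _ _).2 (by simpa [Function.comp_def] using hG)

lemma IsMartingaleMeasure.integrable_map_lastEquiv_snd {m : ℕ} {Q : Measure (Fin (m + 1) → ℝ≥0)}
    (hQ : IsMartingaleMeasure Q) :
    Integrable (fun z : (Fin m → ℝ≥0) × ℝ≥0 => (z.2 : ℝ)) (Q.map (lastEquiv m)) :=
  (integrable_map_equiv _ _).2 (hQ.1 _)

variable {m : ℕ} {Q : Measure (Fin (m + 2) → ℝ≥0)} [IsFiniteMeasure Q]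

lemma IsMartingaleMeasure.ae_integral_condKernel_last (hQ : IsMartingaleMeasure Q) :
    ∀ᵐ p ∂(Q.map (lastEquiv (m + 1))).fst,
      ∫ y, (y : ℝ) ∂(Q.map (lastEquiv (m + 1))).condKernel p = p (Fin.last m) := by
  have hlast := hQ.integrable_map_lastEquiv_snd
  have hfst := fst_map_lastEquiv Q
  refine ae_eq_of_forall_setIntegral_eq_of_sigmaFinite
    (fun _ _ _ => hlast.integral_condKernel.integrableOn)
    (fun _ _ _ => (hfst ▸ hQ.map_init.1 (Fin.last m)).integrableOn) fun A hA _ => ?_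
  have hpre : lastEquiv (m + 1) ⁻¹' (A ×ˢ univ) = Fin.init ⁻¹' A :=
    Set.ext fun _ => and_iff_left trivial
  rw [Measure.setIntegral_condKernel_univ_right hA hlast.integrableOn, setIntegral_map_equiv,
    hpre, hfst, setIntegral_map hA (measurable_coe_real_apply _).aestronglyMeasurable
      (measurable_init _).aemeasurable]
  exact hQ.setIntegral_succ (j := m) (by omega) (measurable_Flt_init _ hA)

lemma IsMartingaleMeasure.ae_integral_lastPeriodValue (hQ : IsMartingaleMeasure Q)
    (Δ : Strategy (m + 2)) {G : (Fin (m + 2) → ℝ≥0) → ℝ} (hG : Integrable G Q) :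
    ∀ᵐ p ∂(Q.map (lastEquiv (m + 1))).fst,
      Integrable (fun y => lastPeriodValue Δ G (p, y)) ((Q.map (lastEquiv (m + 1))).condKernel p) ∧
      ∫ y, lastPeriodValue Δ G (p, y) ∂(Q.map (lastEquiv (m + 1))).condKernel p =
        ∫ y, G ((lastEquiv (m + 1)).symm (p, y)) ∂(Q.map (lastEquiv (m + 1))).condKernel p := by
  filter_upwards [hQ.ae_integral_condKernel_last, hQ.integrable_map_lastEquiv_snd.condKernel_ae,
    (integrable_map_lastEquiv hG).condKernel_ae] with p hmean hy hGp
  have htrade : Integrable (fun y : ℝ≥0 => Δ (Fin.last m) p * ((y : ℝ) - p (Fin.last m)))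
      ((Q.map (lastEquiv (m + 1))).condKernel p) :=
    (hy.sub (integrable_const _)).const_mul _
  refine ⟨htrade.add hGp, ?_⟩
  simp only [lastPeriodValue]
  rw [integral_add htrade hGp, integral_const_mul, integral_sub hy (integrable_const _), hmean,
    integral_const, probReal_univ, one_smul, sub_self, mul_zero, zero_add]

end LastPeriod

section MartingaleTransform

lemma measurable_stockGain {T : ℕ} {Δ : Strategy T} (hΔ : ∀ j, Measurable (Δ j)) :
    Measurable (stockGain Δ) :=
  Finset.measurable_sum _ fun j _ =>
    ((hΔ j).comp (measurable_pi_lambda (restrictPath j) fun _ => measurable_pi_apply _)).mul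
      ((measurable_coe_real_apply _).sub (measurable_coe_real_apply _))

lemma stockGain_eq_zero_of_le_one {T : ℕ} (hT : T ≤ 1) (Δ : Strategy T) (ω : Fin T → ℝ≥0) :
    stockGain Δ ω = 0 := by
  have : IsEmpty (Fin (T - 1)) := by rw [show T - 1 = 0 by omega]; infer_instance
  simp [stockGain]

lemma lintegral_ofReal_stockGain_add_of_le_one {T : ℕ} (hT : T ≤ 1) {Q : Measure (Fin T → ℝ≥0)}
    (Δ : Strategy T) {G : (Fin T → ℝ≥0) → ℝ} (hG : Integrable G Q)
    (hpos : ∀ᵐ ω ∂Q, 0 ≤ stockGain Δ ω + G ω) :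
    ∫⁻ ω, ENNReal.ofReal (stockGain Δ ω + G ω) ∂Q = ENNReal.ofReal (∫ ω, G ω ∂Q) := by
  simp only [stockGain_eq_zero_of_le_one hT, zero_add] at hpos ⊢
  exact (ofReal_integral_eq_lintegral_ofReal hG hpos).symm

theorem IsMartingaleMeasure.lintegral_ofReal_stockGain_add_of_stronglyMeasurable {T : ℕ}
    {Q : Measure (Fin T → ℝ≥0)} [IsFiniteMeasure Q] (hQ : IsMartingaleMeasure Q) {Δ : Strategy T}
    (hΔ : ∀ j, Measurable (Δ j)) {G : (Fin T → ℝ≥0) → ℝ} (hGm : StronglyMeasurable G)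
    (hG : Integrable G Q) (hpos : ∀ᵐ ω ∂Q, 0 ≤ stockGain Δ ω + G ω) :
    ∫⁻ ω, ENNReal.ofReal (stockGain Δ ω + G ω) ∂Q = ENNReal.ofReal (∫ ω, G ω ∂Q) := by
  induction T with
  | zero => exact lintegral_ofReal_stockGain_add_of_le_one (by omega) Δ hG hpos
  | succ n ih =>
    obtain _ | m := n
    · exact lintegral_ofReal_stockGain_add_of_le_one le_rfl Δ hG hpos
    set ρ := Q.map (lastEquiv (m + 1))
    set Gn := fun p => ∫ y, lastPeriodValue Δ G (p, y) ∂ρ.condKernel p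
    have hslice := hQ.ae_integral_lastPeriodValue Δ hG
    have hGρ : Integrable (fun z => G ((lastEquiv (m + 1)).symm z)) ρ :=
      integrable_map_lastEquiv hG
    have hH := measurable_lastPeriodValue (hΔ (Fin.last m)) hGm.measurable
    have hposρ : ∀ᵐ z ∂ρ, 0 ≤ stockGain (dropLast Δ) z.1 + lastPeriodValue Δ G z :=
      (lastEquiv _).measurableEmbedding.ae_map_iff.2
        (by simpa only [stockGain_add_eq_lastPeriodValue] using hpos)
    have hGn : Gn =ᵐ[ρ.fst] fun p => ∫ y, G ((lastEquiv (m + 1)).symm (p, y)) ∂ρ.condKernel p :=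
      hslice.mono fun _ h => h.2
    calc ∫⁻ ω, ENNReal.ofReal (stockGain Δ ω + G ω) ∂Q
        = ∫⁻ z, ENNReal.ofReal (stockGain (dropLast Δ) z.1 + lastPeriodValue Δ G z) ∂ρ := by
          simp only [ρ, lintegral_map_equiv, stockGain_add_eq_lastPeriodValue]
      _ = ∫⁻ p, ENNReal.ofReal (stockGain (dropLast Δ) p + Gn p) ∂ρ.fst :=
          lintegral_ofReal_add_eq_condKernel (measurable_stockGain fun j => hΔ _) hH
            (hslice.mono fun _ h => h.1) hposρ
      _ = ENNReal.ofReal (∫ p, Gn p ∂ρ.fst) :=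
          ih (fst_map_lastEquiv Q ▸ hQ.map_init) (fun _ => hΔ _)
            hH.stronglyMeasurable.integral_kernel_prod_right'
            (hGρ.integral_condKernel.congr hGn.symm)
            (ae_add_integral_condKernel_nonneg (hslice.mono fun _ h => h.1) hposρ)
      _ = ENNReal.ofReal (∫ ω, G ω ∂Q) := by
          rw [integral_congr_ae hGn, Measure.integral_condKernel hGρ, integral_map_equiv]
          simp

theorem IsMartingaleMeasure.lintegral_ofReal_stockGain_add {T : ℕ} {Q : Measure (Fin T → ℝ≥0)}
    [IsFiniteMeasure Q] (hQ : IsMartingaleMeasure Q) {Δ : Strategy T} (hΔ : ∀ j, Measurable (Δ j))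
    {G : (Fin T → ℝ≥0) → ℝ} (hG : Integrable G Q) (hpos : ∀ᵐ ω ∂Q, 0 ≤ stockGain Δ ω + G ω) :
    ∫⁻ ω, ENNReal.ofReal (stockGain Δ ω + G ω) ∂Q = ENNReal.ofReal (∫ ω, G ω ∂Q) := by
  set G' := hG.aestronglyMeasurable.mk G
  have hmk : G' =ᵐ[Q] G := hG.aestronglyMeasurable.ae_eq_mk.symm
  calc ∫⁻ ω, ENNReal.ofReal (stockGain Δ ω + G ω) ∂Q
      = ∫⁻ ω, ENNReal.ofReal (stockGain Δ ω + G' ω) ∂Q :=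
        lintegral_congr_ae (hmk.mono fun ω h => by simp only [h])
    _ = ENNReal.ofReal (∫ ω, G' ω ∂Q) :=
        hQ.lintegral_ofReal_stockGain_add_of_stronglyMeasurable hΔ
          hG.aestronglyMeasurable.stronglyMeasurable_mk (hG.congr hmk.symm)
          (by filter_upwards [hpos, hmk] with ω hω h; rwa [h])
    _ = ENNReal.ofReal (∫ ω, G ω ∂Q) := by rw [integral_congr_ae hmk]

end MartingaleTransform

section Superhedging

variable {T N : ℕ} {g : Fin N → (Fin T → ℝ≥0) → ℝ} {Q : Measure (Fin T → ℝ≥0)}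

lemma integrable_optionGain (hQ : Q ∈ MartMeasures g) (h : Fin N → ℝ) :
    Integrable (optionGain g h) Q :=
  integrable_finsetSum _ fun i _ => (hQ.2.2 i).1.const_mul (h i)

lemma integral_optionGain (hQ : Q ∈ MartMeasures g) (h : Fin N → ℝ) :
    ∫ ω, optionGain g h ω ∂Q = 0 := by
  unfold optionGain
  rw [integral_finsetSum _ fun i _ => (hQ.2.2 i).1.const_mul (h i)]
  exact Finset.sum_eq_zero fun i _ => by rw [integral_const_mul, (hQ.2.2 i).2, mul_zero]

lemma lintegral_ofReal_wealth (hQ : Q ∈ MartMeasures g) (x : ℝ) {Δ : Strategy T}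
    (hΔ : ∀ j, Measurable (Δ j)) (h : Fin N → ℝ) (hW : ∀ᵐ ω ∂Q, 0 ≤ wealth g x Δ h ω) :
    ∫⁻ ω, ENNReal.ofReal (wealth g x Δ h ω) ∂Q = ENNReal.ofReal x := by
  have := hQ.1
  have hwealth ω : wealth g x Δ h ω = stockGain Δ ω + (x + optionGain g h ω) := by
    rw [wealth]; ring
  simp only [hwealth] at hW ⊢
  rw [hQ.2.1.lintegral_ofReal_stockGain_add (G := fun ω => x + optionGain g h ω) hΔ
    ((integrable_const x).add (integrable_optionGain hQ h)) hW,
    integral_add (integrable_const x) (integrable_optionGain hQ h), integral_optionGain hQ h,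
    integral_const, probReal_univ, one_smul, add_zero]

lemma lintegral_ofReal_le_of_mem_Cset {P : Measure (Fin T → ℝ≥0)} (hQ : Q ∈ MartMeasures g)
    (hQP : Q ≪ P) {x : ℝ} {c : (Fin T → ℝ≥0) → ℝ} (hc : c ∈ Cset P g x) :
    ∫⁻ ω, ENNReal.ofReal (c ω) ∂Q ≤ ENNReal.ofReal x := by
  obtain ⟨-, -, Δ, h, hΔ, hW, hcW⟩ := hc
  rw [← lintegral_ofReal_wealth hQ x hΔ h (hW.filter_mono hQP.ae_le)]
  exact lintegral_mono_ae
    ((hcW.filter_mono hQP.ae_le).mono fun _ hω => ENNReal.ofReal_le_ofReal hω)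

end Superhedging

theorem Cset_bounded_in_L0_general
    (T N : ℕ) (g : Fin N → (Fin T → ℝ≥0) → ℝ)
    (P : Measure (Fin T → ℝ≥0)) [IsProbabilityMeasure P]
    (hQ : ∃ Q ∈ MartMeasures g, MeasEquiv P Q) :
    Tendsto (fun K : ℝ => ⨆ c ∈ Cset P g 1, P {ω | K < c ω}) atTop (𝓝 0) := by
  obtain ⟨Q, hQ, hPQ, hQP⟩ := hQ
  have := hQ.1
  have hQbdd : BoundedInProbability Q (Cset P g 1) :=
    boundedInProbability_of_lintegral_le ENNReal.ofReal_ne_top (fun _ hc => hc.1.mono_ac hQP)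
      fun _ hc => lintegral_ofReal_le_of_mem_Cset hQ hQP hc
  exact hQbdd.of_absolutelyContinuous hPQ

/-- If `P` admits an equivalent martingale measure `Q ∈ ℳ`, then the set
`𝒞_P = 𝒞_P(1)` is bounded in `L⁰(P)`: `sup_{c ∈ 𝒞_P} P(c > K) → 0` as `K → ∞`. -/
theorem Cset_bounded_in_L0
    (T N : ℕ) (g : Fin N → (Fin T → ℝ≥0) → ℝ) (hg : ∀ i, Continuous (g i))
    (P : Measure (Fin T → ℝ≥0)) [IsProbabilityMeasure P]
    (hQ : ∃ Q ∈ MartMeasures g, MeasEquiv P Q) :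
    Tendsto (fun K : ℝ => ⨆ c ∈ Cset P g 1, P {ω | K < c ω}) atTop (𝓝 0) :=
  Cset_bounded_in_L0_general T N g P hQ
end
end

section
/- Let P and Q be equivalent probability measures on a measurable space, and let C be a set of nonnegative measurable random variables such that E_Q[c] ≤ 1 for every c ∈ C. Then for every K > 0, sup_{c∈C} P(c > K) ≤ P(dQ/dP ≤ 1/√K) + 1/√K; in particular sup_{c∈C} P(c > K) → 0 as K → ∞, i.e. C is bounded in L⁰(P). -/
/-!
Split `{K < c}` according to whether `dQ/dP ≤ r` with `r = 1/√K`. On the part where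
`dQ/dP > r`, the `P`-measure is at most `Q{K < c} / r ≤ (1/K) / r = 1/√K` by Markov's inequality
under `Q`; the other part is contained in `{dQ/dP ≤ r}`. As `K → ∞` these sets shrink to
`{dQ/dP = 0}`, which is `P`-null because `P ≪ Q`.
-/

open MeasureTheory Filter Topology Set
open scoped NNReal ENNReal

namespace MeasureTheory

variable {α : Type*} [MeasurableSpace α]

lemma mul_measure_lt_le_lintegral_ofReal (μ : Measure α) {f : α → ℝ} (hf : Measurable f) (K : ℝ) :
    ENNReal.ofReal K * μ {x | K < f x} ≤ ∫⁻ x, ENNReal.ofReal (f x) ∂μ :=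
  calc ENNReal.ofReal K * μ {x | K < f x}
      ≤ ENNReal.ofReal K * μ {x | ENNReal.ofReal K ≤ ENNReal.ofReal (f x)} := by
        gcongr
        exact fun hx => ENNReal.ofReal_le_ofReal hx.le
    _ ≤ ∫⁻ x, ENNReal.ofReal (f x) ∂μ :=
        mul_meas_ge_le_lintegral₀ hf.ennreal_ofReal.aemeasurable _

lemma Measure.measure_le_measure_rnDeriv_le_add_div (μ ν : Measure α) (s : Set α)
    {r : ℝ≥0∞} (hr₀ : r ≠ 0) (hr : r ≠ ∞) :
    ν s ≤ ν {x | μ.rnDeriv ν x ≤ r} + μ s / r := by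
  set t := s ∩ {x | r < μ.rnDeriv ν x}
  have ht : ν t ≤ μ s / r := by
    rw [ENNReal.le_div_iff_mul_le (.inl hr₀) (.inl hr), mul_comm]
    calc r * ν t = ∫⁻ _ in t, r ∂ν := (setLIntegral_const t r).symm
      _ ≤ ∫⁻ x in t, μ.rnDeriv ν x ∂ν :=
          setLIntegral_mono (μ.measurable_rnDeriv ν) fun x hx => hx.2.le
      _ ≤ μ t := setLIntegral_rnDeriv_le t
      _ ≤ μ s := measure_mono inter_subset_left
  calc ν s ≤ ν ({x | μ.rnDeriv ν x ≤ r} ∪ t) :=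
        measure_mono fun x hx => (le_or_gt _ r).imp id (⟨hx, ·⟩)
    _ ≤ ν {x | μ.rnDeriv ν x ≤ r} + ν t := measure_union_le _ _
    _ ≤ ν {x | μ.rnDeriv ν x ≤ r} + μ s / r := by gcongr

lemma tendsto_measure_le_nhdsGT {β : Type*} [LinearOrder β] [TopologicalSpace β]
    [OrderTopology β] [FirstCountableTopology β] [DenselyOrdered β] [MeasurableSpace β]
    [OpensMeasurableSpace β] (μ : Measure α) [IsFiniteMeasure μ] {f : α → β}
    (hf : Measurable f) (a : β) :
    Tendsto (fun r => μ {x | f x ≤ r}) (𝓝[>] a) (𝓝 (μ {x | f x ≤ a})) := by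
  have hinter : ⋂ r > a, {x | f x ≤ r} = {x | f x ≤ a} := by
    ext x
    simp only [mem_iInter, mem_ofPred_eq]
    exact ⟨fun h => le_of_forall_gt_imp_ge_of_dense h, fun h r hr => h.trans hr.le⟩
  rcases (Ioi a).eq_empty_or_nonempty with h | ⟨r, hr⟩
  · simp [h]
  rw [← hinter]
  exact tendsto_measure_biInter_gt (fun r _ => (hf measurableSet_Iic).nullMeasurableSet)
    (fun i j _ hij x hx => le_trans hx hij) ⟨r, hr, measure_ne_top μ _⟩

end MeasureTheory

lemma ENNReal.tendsto_ofReal_one_div_sqrt_atTop :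
    Tendsto (fun K : ℝ => ENNReal.ofReal (1 / √K)) atTop (𝓝[>] 0) := by
  refine tendsto_nhdsWithin_iff.2 ⟨?_, ?_⟩
  · simpa using ENNReal.tendsto_ofReal
      (tendsto_const_nhds.div_atTop Real.tendsto_sqrt_atTop : Tendsto (fun K : ℝ => 1 / √K) _ _)
  · filter_upwards [eventually_gt_atTop 0] with K hK
    simpa using hK

lemma ENNReal.inv_ofReal_div_ofReal_one_div_sqrt {K : ℝ} (hK : 0 < K) :
    (ENNReal.ofReal K)⁻¹ / ENNReal.ofReal (1 / √K) = ENNReal.ofReal (1 / √K) := by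
  have hs : 0 < √K := Real.sqrt_pos.2 hK
  rw [← ENNReal.ofReal_inv_of_pos hK, ← ENNReal.ofReal_div_of_pos (by positivity)]
  congr 1
  field_simp
  rw [Real.sq_sqrt hK.le]

lemma measure_lt_le_measure_rnDeriv_le_add {Ω : Type*} [MeasurableSpace Ω] (P Q : Measure Ω)
    {c : Ω → ℝ} (hc : Measurable c) (hexp : ∫⁻ ω, ENNReal.ofReal (c ω) ∂Q ≤ 1)
    {K : ℝ} (hK : 0 < K) :
    P {ω | K < c ω} ≤
      P {ω | Q.rnDeriv P ω ≤ ENNReal.ofReal (1 / √K)} + ENNReal.ofReal (1 / √K) := by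
  have markov : Q {ω | K < c ω} ≤ (ENNReal.ofReal K)⁻¹ := by
    rw [ENNReal.le_inv_iff_mul_le, mul_comm]
    exact (mul_measure_lt_le_lintegral_ofReal Q hc K).trans hexp
  calc P {ω | K < c ω}
      ≤ P {ω | Q.rnDeriv P ω ≤ ENNReal.ofReal (1 / √K)} +
          Q {ω | K < c ω} / ENNReal.ofReal (1 / √K) :=
        Q.measure_le_measure_rnDeriv_le_add_div P _ (by simpa using hK) ENNReal.ofReal_ne_top
    _ ≤ P {ω | Q.rnDeriv P ω ≤ ENNReal.ofReal (1 / √K)} +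
          (ENNReal.ofReal K)⁻¹ / ENNReal.ofReal (1 / √K) := by gcongr
    _ = P {ω | Q.rnDeriv P ω ≤ ENNReal.ofReal (1 / √K)} + ENNReal.ofReal (1 / √K) := by
        rw [ENNReal.inv_ofReal_div_ofReal_one_div_sqrt hK]

theorem bounded_in_L0_of_equivalent_general
    {Ω : Type*} [MeasurableSpace Ω] (P Q : Measure Ω)
    [IsProbabilityMeasure P] [IsProbabilityMeasure Q]
    (hPQ : P ≪ Q)
    (C : Set (Ω → ℝ)) (hmeas : ∀ c ∈ C, Measurable c)
    (hexp : ∀ c ∈ C, ∫⁻ ω, ENNReal.ofReal (c ω) ∂Q ≤ 1) :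
    (∀ K : ℝ, 0 < K →
      ⨆ c ∈ C, P {ω | K < c ω} ≤
        P {ω | Q.rnDeriv P ω ≤ ENNReal.ofReal (1 / Real.sqrt K)} +
          ENNReal.ofReal (1 / Real.sqrt K)) ∧
    Tendsto (fun K : ℝ => ⨆ c ∈ C, P {ω | K < c ω}) atTop (𝓝 0) := by
  have bound (K : ℝ) (hK : 0 < K) := iSup₂_le fun c hc =>
    measure_lt_le_measure_rnDeriv_le_add P Q (hmeas c hc) (hexp c hc) hK
  have null : P {ω | Q.rnDeriv P ω ≤ 0} = 0 := by
    simpa [ae_iff] using Measure.rnDeriv_pos' hPQ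
  have hlim := ((tendsto_measure_le_nhdsGT P (Q.measurable_rnDeriv P) 0).comp
    ENNReal.tendsto_ofReal_one_div_sqrt_atTop).add
      (tendsto_nhdsWithin_iff.1 ENNReal.tendsto_ofReal_one_div_sqrt_atTop).1
  rw [null, add_zero] at hlim
  refine ⟨bound, tendsto_of_tendsto_of_tendsto_of_le_of_le' tendsto_const_nhds hlim
    (.of_forall fun _ => zero_le) ?_⟩
  filter_upwards [eventually_gt_atTop 0] with K hK
  exact bound K hK

/-- Let `P ∼ Q` be equivalent probability measures and `C` a set of
nonnegative measurable random variables with `E_Q[c] ≤ 1` for every `c ∈ C`. Then for every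
`K > 0`, `sup_{c∈C} P(c > K) ≤ P(dQ/dP ≤ 1/√K) + 1/√K`; in particular
`sup_{c∈C} P(c > K) → 0` as `K → ∞`, i.e. `C` is bounded in `L⁰(P)`. -/
theorem bounded_in_L0_of_equivalent
    {Ω : Type*} [MeasurableSpace Ω] (P Q : Measure Ω)
    [IsProbabilityMeasure P] [IsProbabilityMeasure Q]
    (hPQ : P ≪ Q) (hQP : Q ≪ P)
    (C : Set (Ω → ℝ)) (hmeas : ∀ c ∈ C, Measurable c) (hpos : ∀ c ∈ C, ∀ ω, 0 ≤ c ω)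
    (hexp : ∀ c ∈ C, ∫⁻ ω, ENNReal.ofReal (c ω) ∂Q ≤ 1) :
    (∀ K : ℝ, 0 < K →
      ⨆ c ∈ C, P {ω | K < c ω} ≤
        P {ω | Q.rnDeriv P ω ≤ ENNReal.ofReal (1 / Real.sqrt K)} +
          ENNReal.ofReal (1 / Real.sqrt K)) ∧
    Tendsto (fun K : ℝ => ⨆ c ∈ C, P {ω | K < c ω}) atTop (𝓝 0) :=
  bounded_in_L0_of_equivalent_general P Q hPQ C hmeas hexp
end
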